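/- Suppose γ̂_{i,T} = 0 whenever D_{i,1:T} ≠ d_{1:T}, and Y_{i,T} = H_{i,T} β^T + ε_{i,T} on the event D_{i,1:T} = d_{1:T}. Then the estimator μ̂ = (1/n)∑_i [ γ̂_{i,T} Y_{i,T} − ∑_{t=2}^T (γ̂_{i,t} − γ̂_{i,t−1}) H_{i,t} β̂^t − (γ̂_{i,1} − 1/n) X_{i,1} β̂^1 ] satisfies the exact algebraic identity μ̂ − X̄₁β^1 = ∑_{t=1}^T (γ̂_t H_t − γ̂_{t−1} H_t)(β^t − β̂^t) + γ̂_Tᵀ ε_T + ∑_{t=2}^T γ̂_{t−1}ᵀ (H_t β^t − H_{t−1} β^{t−1}), where γ̂_0 ≡ 1/n, H_1 ≡ X_1 and γ̂_t H_t denotes (1/n)∑_i γ̂_{i,t} H_{i,t} (with the normalization absorbed). -/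
import Mathlib


open Finset

private lemma tele_aux (g a : ℕ → ℝ) (T : ℕ) (hT : 1 ≤ T) :
    (∑ t ∈ Finset.Icc 1 T, (g t - g (t - 1)) * a t)
      + ∑ t ∈ Finset.Icc 2 T, g (t - 1) * (a t - a (t - 1))
    = g T * a T - g 0 * a 1 := by
  induction T, hT using Nat.le_induction with
  | base => norm_num; ring
  | succ T hT ih =>
    rw [Finset.sum_Icc_succ_top (by omega), Finset.sum_Icc_succ_top (by omega)]
    simp only [Nat.add_sub_cancel]
    linear_combination ih

/-- Exact algebraic error decomposition of the dynamic covariate balancing estimator: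
with `γ̂₀ ≡ 1/n`, `H₁ ≡ X₁`, weights vanishing off the target treatment path `d_{1:T}`,
and `Y_i = H_{i,T}β^T + ε_i` on that path,
`μ̂ − X̄₁β¹ = ∑_{t=1}^T (γ̂_t H_t − γ̂_{t−1} H_t)(β^t − β̂^t) + γ̂_Tᵀε
  + ∑_{t=2}^T γ̂_{t−1}ᵀ(H_tβ^t − H_{t−1}β^{t−1})`. -/
theorem stmt_8 (n T : ℕ) (hn : 0 < n) (hT : 1 ≤ T) (p : ℕ → ℕ)
    (H : (t : ℕ) → Fin n → Fin (p t) → ℝ)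
    (β βhat : (t : ℕ) → Fin (p t) → ℝ)
    (γ : ℕ → Fin n → ℝ) (hγ0 : ∀ i, γ 0 i = 1 / n)
    (D : Fin n → ℕ → Bool) (d : ℕ → Bool)
    (Y ε : Fin n → ℝ)
    (hγT : ∀ i, (∃ t ∈ Finset.Icc 1 T, D i t ≠ d t) → γ T i = 0)
    (hY : ∀ i, (∀ t ∈ Finset.Icc 1 T, D i t = d t) →
      Y i = (∑ j, H T i j * β T j) + ε i) :
    (∑ i, (γ T i * Y i
        - (∑ t ∈ Finset.Icc 2 T, (γ t i - γ (t - 1) i) * ∑ j, H t i j * βhat t j)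
        - (γ 1 i - 1 / n) * ∑ j, H 1 i j * βhat 1 j))
      - (1 / n : ℝ) * ∑ i, ∑ j, H 1 i j * β 1 j
    = (∑ t ∈ Finset.Icc 1 T, ∑ i,
        (γ t i - γ (t - 1) i) * ∑ j, H t i j * (β t j - βhat t j))
      + (∑ i, γ T i * ε i)
      + ∑ t ∈ Finset.Icc 2 T, ∑ i,
          γ (t - 1) i * ((∑ j, H t i j * β t j) - ∑ j, H (t - 1) i j * β (t - 1) j) := by
  have hins : Finset.Icc 1 T = insert 1 (Finset.Icc 2 T) := by
    ext x; simp [Finset.mem_Icc]; omega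
  have h1ni : (1 : ℕ) ∉ Finset.Icc 2 T := by simp
  have key : ∀ i : Fin n,
      (γ T i * Y i
        - (∑ t ∈ Finset.Icc 2 T, (γ t i - γ (t - 1) i) * ∑ j, H t i j * βhat t j)
        - (γ 1 i - 1 / n) * ∑ j, H 1 i j * βhat 1 j)
      - (1 / n : ℝ) * ∑ j, H 1 i j * β 1 j
    = (∑ t ∈ Finset.Icc 1 T, (γ t i - γ (t - 1) i) * ∑ j, H t i j * (β t j - βhat t j))
      + γ T i * ε i
      + ∑ t ∈ Finset.Icc 2 T, γ (t - 1) i *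
          ((∑ j, H t i j * β t j) - ∑ j, H (t - 1) i j * β (t - 1) j) := by
    intro i
    have hYA : γ T i * Y i = γ T i * ((∑ j, H T i j * β T j) + ε i) := by
      by_cases h : ∀ t ∈ Finset.Icc 1 T, D i t = d t
      · rw [hY i h]
      · rw [hγT i (by push_neg at h; exact h)]; ring
    have hsub : ∀ t : ℕ, (∑ j, H t i j * (β t j - βhat t j))
        = (∑ j, H t i j * β t j) - ∑ j, H t i j * βhat t j := by
      intro t
      rw [← Finset.sum_sub_distrib]
      exact Finset.sum_congr rfl fun j _ => by ring
    have ht := tele_aux (fun t => γ t i) (fun t => ∑ j, H t i j * β t j) T hT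
    rw [hins, Finset.sum_insert h1ni] at ht
    norm_num at ht
    simp only [hsub]
    rw [hYA, hins, Finset.sum_insert h1ni]
    norm_num
    have hAB : ∑ t ∈ Finset.Icc 2 T, (γ t i - γ (t - 1) i) *
          ((∑ j, H t i j * β t j) - ∑ j, H t i j * βhat t j)
        = (∑ t ∈ Finset.Icc 2 T, (γ t i - γ (t - 1) i) * ∑ j, H t i j * β t j)
          - ∑ t ∈ Finset.Icc 2 T, (γ t i - γ (t - 1) i) * ∑ j, H t i j * βhat t j := by
      rw [← Finset.sum_sub_distrib]
      exact Finset.sum_congr rfl fun t _ => by ring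
    have hg0 := hγ0 i
    linear_combination (-1 : ℝ) * ht - hAB + ((∑ j, H 1 i j * β 1 j) - ∑ j, H 1 i j * βhat 1 j) * hg0
  rw [Finset.mul_sum, ← Finset.sum_sub_distrib,
    Finset.sum_congr rfl (fun i _ => key i),
    Finset.sum_add_distrib, Finset.sum_add_distrib]
  congr 1
  · congr 1
    exact Finset.sum_comm
  · exact Finset.sum_comm
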